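/- arXiv:2201.00137 — 2 statements merged into one kernel-verified Lean document; each statement's English description precedes it below -/
import Mathlib

section
/- Let F = (F_1, …, F_n) be a polynomial vector field on ℝⁿ, let V, B ∈ ℝ[x_1, …, x_n], let α > 0 and ε ≥ 0, and suppose there exist SOS polynomials s_1, s_2 ∈ ℝ[x_1, …, x_n] such that both −⟨∇V, F⟩ − s_1·B and ⟨∇B, F⟩ + (α − s_2)·B − ε are sums of squares. Then for every solution x : ℝ → ℝⁿ of ẋ = F(x) with B(x(0)) ≥ 0: (i) B(x(t)) ≥ 0 for all t ≥ 0, and (ii) the function t ↦ V(x(t)) is nonincreasing on [0, ∞). -/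
open MvPolynomial Set

/-- A real multivariate polynomial is a sum of squares. -/
def IsSOS {N : ℕ} (p : MvPolynomial (Fin N) ℝ) : Prop :=
  ∃ (k : ℕ) (f : Fin k → MvPolynomial (Fin N) ℝ), p = ∑ i, (f i) ^ 2

/-- The Lie derivative ⟨∇W, F⟩ = Σᵢ (∂W/∂xᵢ)·Fᵢ of a polynomial `W` along a
polynomial vector field `F`. -/
noncomputable def lieDeriv {N : ℕ} (W : MvPolynomial (Fin N) ℝ)
    (F : Fin N → MvPolynomial (Fin N) ℝ) : MvPolynomial (Fin N) ℝ :=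
  ∑ i, (pderiv i W) * F i

lemma IsSOS.eval_nonneg {N : ℕ} {p : MvPolynomial (Fin N) ℝ} (hp : IsSOS p)
    (y : Fin N → ℝ) : 0 ≤ eval y p := by
  obtain ⟨k, f, rfl⟩ := hp
  simp only [map_sum, map_pow]
  exact Finset.sum_nonneg fun i _ => sq_nonneg _

lemma hasDerivAt_eval_curve {N : ℕ} (p : MvPolynomial (Fin N) ℝ)
    (x : ℝ → Fin N → ℝ) (x' : Fin N → ℝ) (t : ℝ)
    (hx : ∀ i, HasDerivAt (fun τ => x τ i) (x' i) t) :
    HasDerivAt (fun τ => eval (x τ) p) (∑ i, eval (x t) (pderiv i p) * x' i) t := by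
  induction p using MvPolynomial.induction_on with
  | C a => simpa using hasDerivAt_const t a
  | add p q hp hq =>
      have := hp.fun_add hq
      simpa [map_add, add_mul, Finset.sum_add_distrib] using this
  | mul_X p j hp =>
      have key : ∀ i : Fin N, eval (x t) (pderiv i (p * X j)) * x' i
          = eval (x t) (pderiv i p) * x' i * x t j
            + (if i = j then eval (x t) p * x' j else 0) := by
        intro i
        simp only [pderiv_mul, pderiv_X, map_add, map_mul, eval_X]
        by_cases h : i = j <;> simp [h, Pi.single_apply] <;> ring
      have : HasDerivAt (fun τ => eval (x τ) p * x τ j)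
          ((∑ i, eval (x t) (pderiv i p) * x' i) * x t j + eval (x t) p * x' j) t :=
        hp.fun_mul (hx j)
      convert this using 1
      · funext τ; simp
      · rw [Finset.sum_congr rfl fun i _ => key i, Finset.sum_add_distrib,
          Finset.sum_ite_eq' Finset.univ j, ← Finset.sum_mul]
        simp

lemma hasDerivAt_eval_lieDeriv {N : ℕ} (p : MvPolynomial (Fin N) ℝ)
    (F : Fin N → MvPolynomial (Fin N) ℝ) (x : ℝ → Fin N → ℝ) (t : ℝ)
    (hx : ∀ i, HasDerivAt (fun τ => x τ i) (eval (x t) (F i)) t) :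
    HasDerivAt (fun τ => eval (x τ) p) (eval (x t) (lieDeriv p F)) t := by
  have := hasDerivAt_eval_curve p x (fun i => eval (x t) (F i)) t hx
  simpa [lieDeriv, map_sum] using this

/-- Theorem 1 (safety and stability of the closed-loop learned system): if
`-⟨∇V,F⟩ - s₁ B` and `⟨∇B,F⟩ + (α - s₂) B - ε` are SOS with `s₁, s₂` SOS, `α > 0`,
`ε ≥ 0`, then along every solution of `ẋ = F(x)` starting with `B(x(0)) ≥ 0`,
the barrier stays nonnegative and `V` is nonincreasing on `[0, ∞)`. -/
theorem sos_safety_and_stability {N : ℕ} (F : Fin N → MvPolynomial (Fin N) ℝ)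
    (V B : MvPolynomial (Fin N) ℝ) (α ε : ℝ) (hα : 0 < α) (hε : 0 ≤ ε)
    (s₁ s₂ : MvPolynomial (Fin N) ℝ) (hs₁ : IsSOS s₁) (hs₂ : IsSOS s₂)
    (h1 : IsSOS (-(lieDeriv V F) - s₁ * B))
    (h2 : IsSOS (lieDeriv B F + (C α - s₂) * B - C ε))
    (x : ℝ → Fin N → ℝ)
    (hx : ∀ i, ∀ t : ℝ, 0 ≤ t → HasDerivAt (fun τ => x τ i) (eval (x t) (F i)) t)
    (h0 : 0 ≤ eval (x 0) B) :
    (∀ t : ℝ, 0 ≤ t → 0 ≤ eval (x t) B) ∧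
      AntitoneOn (fun t => eval (x t) V) (Ici 0) := by
  set b : ℝ → ℝ := fun t => eval (x t) B with hb_def
  set v : ℝ → ℝ := fun t => eval (x t) V with hv_def
  have hbD : ∀ t : ℝ, 0 ≤ t → HasDerivAt b (eval (x t) (lieDeriv B F)) t :=
    fun t ht => hasDerivAt_eval_lieDeriv B F x t (fun i => hx i t ht)
  have hvD : ∀ t : ℝ, 0 ≤ t → HasDerivAt v (eval (x t) (lieDeriv V F)) t :=
    fun t ht => hasDerivAt_eval_lieDeriv V F x t (fun i => hx i t ht)
  -- pointwise inequalities from the SOS certificates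
  have hVineq : ∀ y : Fin N → ℝ,
      eval y (lieDeriv V F) ≤ -(eval y s₁ * eval y B) := by
    intro y
    have := h1.eval_nonneg y
    simp only [map_sub, map_neg, map_mul] at this
    linarith
  have hBineq : ∀ y : Fin N → ℝ,
      (eval y s₂ - α) * eval y B + ε ≤ eval y (lieDeriv B F) := by
    intro y
    have := h2.eval_nonneg y
    simp only [map_sub, map_add, map_mul, eval_C] at this
    nlinarith [this]
  have hbcont : ∀ t : ℝ, 0 ≤ t → ContinuousAt b t :=
    fun t ht => (hbD t ht).continuousAt
  -- Part (i): the barrier stays nonnegative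
  have safe : ∀ t : ℝ, 0 ≤ t → 0 ≤ b t := by
    intro t₁ ht₁
    by_contra hneg
    push_neg at hneg
    have ht₁pos : 0 < t₁ := by
      rcases lt_or_eq_of_le ht₁ with h | h
      · exact h
      · exact absurd h0 (by rw [← h] at hneg; simpa [hb_def] using not_le.mpr hneg)
    set S : Set ℝ := {t ∈ Icc 0 t₁ | 0 ≤ b t} with hS_def
    have hScont : ContinuousOn b (Icc 0 t₁) :=
      fun t ht => (hbcont t ht.1).continuousWithinAt
    have hSclosed : IsClosed S := by
      have : S = Icc 0 t₁ ∩ b ⁻¹' (Ici 0) := by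
        ext t; simp [hS_def, and_comm]
      rw [this]
      exact (hScont.preimage_isClosed_of_isClosed isClosed_Icc isClosed_Ici)
    have hSsub : S ⊆ Icc 0 t₁ := fun t ht => ht.1
    have hScomp : IsCompact S := isCompact_Icc.of_isClosed_subset hSclosed hSsub
    have hSne : S.Nonempty := ⟨0, ⟨le_refl 0, le_of_lt ht₁pos⟩, h0⟩
    set t₀ : ℝ := sSup S with ht₀_def
    have ht₀S : t₀ ∈ S := hScomp.sSup_mem hSne
    have ht₀0 : 0 ≤ t₀ := ht₀S.1.1
    have ht₀le : t₀ ≤ t₁ := ht₀S.1.2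
    have hbt₀ : 0 ≤ b t₀ := ht₀S.2
    have ht₀lt : t₀ < t₁ := by
      rcases lt_or_eq_of_le ht₀le with h | h
      · exact h
      · rw [h] at hbt₀; linarith
    have hbneg : ∀ t, t₀ < t → t ≤ t₁ → b t < 0 := by
      intro t ht ht'
      by_contra h
      push_neg at h
      have : t ∈ S := ⟨⟨le_trans ht₀0 (le_of_lt ht), ht'⟩, h⟩
      have := le_csSup hScomp.bddAbove this
      linarith
    -- bound s₂ along the trajectory on [t₀, t₁]
    have hs₂cont : ContinuousOn (fun t => eval (x t) s₂) (Icc t₀ t₁) := by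
      intro t ht
      exact ((hasDerivAt_eval_lieDeriv s₂ F x t
        (fun i => hx i t (le_trans ht₀0 ht.1))).continuousAt).continuousWithinAt
    obtain ⟨tM, htM, htMmax⟩ := isCompact_Icc.exists_isMaxOn
      (nonempty_Icc.mpr ht₀le) hs₂cont
    set M : ℝ := eval (x tM) s₂ with hM_def
    set K : ℝ := max M 0 with hK_def
    have hKM : M ≤ K := le_max_left _ _
    have hK0 : 0 ≤ K := le_max_right _ _
    -- g(t) = b(t) e^{-K t} is monotone on [t₀, t₁]
    set g : ℝ → ℝ := fun t => b t * Real.exp (-K * t) with hg_def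
    have hexpD : ∀ t : ℝ, HasDerivAt (fun τ => Real.exp (-K * τ))
        (Real.exp (-K * t) * (-K)) t := by
      intro t
      have := ((hasDerivAt_id t).const_mul (-K)).exp
      simpa [mul_comm] using this
    have hgD : ∀ t ∈ Icc t₀ t₁, HasDerivAt g
        (eval (x t) (lieDeriv B F) * Real.exp (-K * t)
          + b t * (Real.exp (-K * t) * (-K))) t := by
      intro t ht
      exact (hbD t (le_trans ht₀0 ht.1)).mul (hexpD t)
    have hgcont : ContinuousOn g (Icc t₀ t₁) :=
      fun t ht => ((hgD t ht).continuousAt).continuousWithinAt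
    have hgdiff : DifferentiableOn ℝ g (interior (Icc t₀ t₁)) := by
      intro t ht
      rw [interior_Icc] at ht
      exact ((hgD t ⟨le_of_lt ht.1, le_of_lt ht.2⟩).differentiableAt).differentiableWithinAt
    have hgderiv : ∀ t ∈ interior (Icc t₀ t₁), 0 ≤ deriv g t := by
      intro t ht
      rw [interior_Icc] at ht
      have hd := hgD t ⟨le_of_lt ht.1, le_of_lt ht.2⟩
      rw [hd.deriv]
      have hbt : b t < 0 := hbneg t ht.1 (le_of_lt ht.2)
      have hs₂le : eval (x t) s₂ ≤ M := htMmax ⟨le_of_lt ht.1, le_of_lt ht.2⟩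
      have hs₂nn : 0 ≤ eval (x t) s₂ := hs₂.eval_nonneg _
      have hB' := hBineq (x t)
      have hexp : 0 < Real.exp (-K * t) := Real.exp_pos _
      have key : 0 ≤ eval (x t) (lieDeriv B F) - K * b t := by
        have h1 : (eval (x t) s₂ - α) * b t + ε ≤ eval (x t) (lieDeriv B F) := hB'
        nlinarith [mul_nonneg (sub_nonneg.mpr (le_trans hs₂le hKM))
          (neg_nonneg.mpr (le_of_lt hbt))]
      nlinarith
    have hgmono : MonotoneOn g (Icc t₀ t₁) :=
      monotoneOn_of_deriv_nonneg (convex_Icc t₀ t₁) hgcont hgdiff hgderiv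
    have hle := hgmono ⟨le_refl t₀, ht₀le⟩ ⟨ht₀le, le_refl t₁⟩ ht₀le
    have h₀ : 0 ≤ g t₀ := mul_nonneg hbt₀ (Real.exp_pos _).le
    have h₁ : g t₁ < 0 := mul_neg_of_neg_of_pos hneg (Real.exp_pos _)
    linarith
  refine ⟨safe, ?_⟩
  -- Part (ii): V is nonincreasing
  have hvcont : ContinuousOn v (Ici 0) :=
    fun t ht => ((hvD t ht).continuousAt).continuousWithinAt
  have hvdiff : DifferentiableOn ℝ v (interior (Ici 0)) := by
    intro t ht
    rw [interior_Ici] at ht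
    exact ((hvD t (le_of_lt ht)).differentiableAt).differentiableWithinAt
  have hvderiv : ∀ t ∈ interior (Ici 0), deriv v t ≤ 0 := by
    intro t ht
    rw [interior_Ici] at ht
    rw [(hvD t (le_of_lt ht)).deriv]
    have hbnn : 0 ≤ eval (x t) B := safe t (le_of_lt ht)
    have hs₁nn : 0 ≤ eval (x t) s₁ := hs₁.eval_nonneg _
    have := hVineq (x t)
    nlinarith
  exact antitoneOn_of_deriv_nonpos (convex_Ici 0) hvcont hvdiff hvderiv
end

section
/- Let B : ℝⁿ → ℝ be continuously differentiable, let F : ℝⁿ → ℝⁿ be continuous, let α > 0, and suppose ⟨∇B(y), F(y)⟩ ≥ −α·B(y) for all y ∈ ℝⁿ. Then for every differentiable curve x : ℝ → ℝⁿ with x′(t) = F(x(t)) for all t ≥ 0 and B(x(0)) ≥ 0, one has B(x(t)) ≥ 0 for all t ≥ 0; i.e., the set 𝔅 = {y ∈ ℝⁿ : B(y) ≥ 0} is forward invariant, and trajectories starting inside 𝔅 never reach ℝⁿ \ 𝔅. -/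
open Set

/-- Control barrier function forward invariance: if `B` is `C¹`, `F` continuous,
`α > 0`, and the Lie derivative satisfies `⟨∇B(y), F(y)⟩ ≥ -α B(y)` everywhere,
then along every solution of `ẋ = F(x)` with `B(x(0)) ≥ 0` one has `B(x(t)) ≥ 0`
for all `t ≥ 0`: the set `{y | B(y) ≥ 0}` is forward invariant. -/
theorem cbf_forward_invariance {n : ℕ}
    (B : (Fin n → ℝ) → ℝ) (F : (Fin n → ℝ) → (Fin n → ℝ))
    (hB : ContDiff ℝ 1 B) (hF : Continuous F)
    (α : ℝ) (hα : 0 < α)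
    (hineq : ∀ y : Fin n → ℝ, -α * B y ≤ fderiv ℝ B y (F y))
    (x : ℝ → Fin n → ℝ)
    (hx : ∀ t : ℝ, 0 ≤ t → HasDerivAt x (F (x t)) t)
    (h0 : 0 ≤ B (x 0)) :
    ∀ t : ℝ, 0 ≤ t → 0 ≤ B (x t) := by
  set h : ℝ → ℝ := fun t => Real.exp (α * t) * B (x t) with hh
  have hBdiff : Differentiable ℝ B := hB.differentiable one_ne_zero
  have hg : ∀ t : ℝ, 0 ≤ t →
      HasDerivAt (fun t => B (x t)) (fderiv ℝ B (x t) (F (x t))) t := by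
    intro t ht
    exact ((hBdiff (x t)).hasFDerivAt.comp_hasDerivAt t (hx t ht))
  have hhd : ∀ t : ℝ, 0 ≤ t →
      HasDerivAt h (α * Real.exp (α * t) * B (x t)
        + Real.exp (α * t) * fderiv ℝ B (x t) (F (x t))) t := by
    intro t ht
    have he : HasDerivAt (fun t => Real.exp (α * t)) (α * Real.exp (α * t)) t := by
      simpa [mul_comm, Function.comp_def] using (Real.hasDerivAt_exp (α * t)).comp t
        ((hasDerivAt_id t).const_mul α)
    simpa [hh, Pi.mul_def] using he.mul (hg t ht)
  have hmono : MonotoneOn h (Ici (0:ℝ)) := by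
    apply monotoneOn_of_deriv_nonneg (convex_Ici 0)
    · intro t ht
      exact ((hhd t ht).continuousAt).continuousWithinAt
    · intro t ht
      rw [interior_Ici] at ht
      exact ((hhd t ht.le).differentiableAt).differentiableWithinAt
    · intro t ht
      rw [interior_Ici] at ht
      rw [(hhd t ht.le).deriv]
      have h1 := hineq (x t)
      have h2 : 0 ≤ Real.exp (α * t) := (Real.exp_pos _).le
      nlinarith [Real.exp_pos (α * t)]
  intro t ht
  have := hmono (self_mem_Ici) (mem_Ici.mpr ht) ht
  have hh0 : h 0 = B (x 0) := by simp [hh]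
  have : 0 ≤ h t := by rw [hh0] at this; linarith
  have := (Real.exp_pos (α * t))
  simp only [hh] at *
  nlinarith
end
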